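/- Let a, b, c, d and aᵢ, bᵢ, cᵢ, dᵢ (i = 1, 2, 3) be differentiable functions of t, let ξ = a e₁ + b e₂ + c e₃ + d e₄ and Xᵢ = aᵢ e₁ + bᵢ e₂ + cᵢ e₃ + dᵢ e₄ be the corresponding vector fields on ℝ⁴, and suppose that at every point ξ is a unit vector, the Xᵢ are orthonormal, and each Xᵢ is orthogonal to ξ (all with respect to g̃). Then the mean curvature H = (1/3) Σᵢ₌₁³ g̃(∇̃_{Xᵢ} Xᵢ, ξ) vanishes identically if and only if Σᵢ₌₁³ [aᵢ(bᵢ d − b dᵢ) + bᵢ(cᵢ d − c dᵢ) + dᵢ(a aᵢ' + b bᵢ' + c cᵢ' + d dᵢ')] = 0 identically. More precisely, Σᵢ₌₁³ g̃(∇̃_{Xᵢ} Xᵢ, ξ) = Σᵢ₌₁³ [aᵢ(bᵢ d − b dᵢ) + bᵢ(cᵢ d − c dᵢ) + dᵢ(a aᵢ' + b bᵢ' + c cᵢ' + d dᵢ')] at every point. -/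

import Mathlib

/-!
Write `Xᵢ = Σⱼ Aⱼ eⱼ`. Then `∇̃_{Xᵢ} Xᵢ = Σⱼ Xᵢ(Aⱼ) eⱼ + Σⱼₖ Aⱼ Aₖ ∇̃_{eⱼ} eₖ`, and since all
coefficients depend on `t` alone, `Xᵢ(Aⱼ) = dᵢ Aⱼ'`. Against the orthonormal frame the first part
gives `dᵢ (a aᵢ' + b bᵢ' + c cᵢ' + d dᵢ')` and the quadratic part gives
`aᵢ (bᵢ d − b dᵢ) + bᵢ (cᵢ d − c dᵢ)`. This is verified in coordinates: only `∂/∂t` derivatives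
survive in the coordinate formula for `∇̃`, and the Christoffel symbols of `g̃` are explicit
polynomials in `t`, obtained from the explicit inverse of the metric matrix.
-/

noncomputable section

/-- The left-invariant frame fields e₁,e₂,e₃,e₄ on ℝ⁴ (coordinates x,y,z,t = p 0,...,p 3). -/
def eVF (i : Fin 4) (p : Fin 4 → ℝ) : Fin 4 → ℝ :=
  ![![1, 0, 0, 0],
    ![p 3, 1, 0, 0],
    ![(p 3) ^ 2 / 2, p 3, 1, 0],
    ![0, 0, 0, 1]] i

/-- The matrix of the metric g̃ at a point with last coordinate t. -/
def gMat (t : ℝ) : Matrix (Fin 4) (Fin 4) ℝ :=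
  !![1, -t, t ^ 2 / 2, 0;
     -t, 1 + t ^ 2, -t * (1 + t ^ 2 / 2), 0;
     t ^ 2 / 2, -t * (1 + t ^ 2 / 2), 1 + t ^ 2 + t ^ 4 / 4, 0;
     0, 0, 0, 1]

/-- The metric g̃ as a bilinear form on each tangent space. -/
def gMet (p X Y : Fin 4 → ℝ) : ℝ :=
  ∑ i, ∑ j, gMat (p 3) i j * X i * Y j

/-- Partial derivative in direction of the i-th coordinate. -/
def pd (i : Fin 4) (f : (Fin 4 → ℝ) → ℝ) (p : Fin 4 → ℝ) : ℝ :=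
  deriv (fun s => f (Function.update p i s)) (p i)

/-- The Christoffel symbols Γᵏᵢⱼ of g̃. -/
def Chr (p : Fin 4 → ℝ) (k i j : Fin 4) : ℝ :=
  (1 / 2) * ∑ l, (gMat (p 3))⁻¹ k l *
    (pd i (fun q => gMat (q 3) j l) p + pd j (fun q => gMat (q 3) i l) p
      - pd l (fun q => gMat (q 3) i j) p)

/-- The Levi-Civita connection of g̃ in coordinates. -/
def nabla (X Y : (Fin 4 → ℝ) → (Fin 4 → ℝ)) (p : Fin 4 → ℝ) : Fin 4 → ℝ :=
  fun k => (∑ i, X p i * pd i (fun q => Y q k) p)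
    + ∑ i, ∑ j, Chr p k i j * X p i * Y p j

/-- Lie bracket of vector fields on ℝ⁴. -/
def bracket (X Y : (Fin 4 → ℝ) → (Fin 4 → ℝ)) (p : Fin 4 → ℝ) : Fin 4 → ℝ :=
  fderiv ℝ Y p (X p) - fderiv ℝ X p (Y p)

/-- The curvature tensor R̃(X,Y)Z = ∇̃_X ∇̃_Y Z − ∇̃_Y ∇̃_X Z − ∇̃_{[X,Y]} Z. -/
def Riem (X Y Z : (Fin 4 → ℝ) → (Fin 4 → ℝ)) (p : Fin 4 → ℝ) : Fin 4 → ℝ :=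
  nabla X (nabla Y Z) p - nabla Y (nabla X Z) p - nabla (bracket X Y) Z p

def gMatInv (t : ℝ) : Matrix (Fin 4) (Fin 4) ℝ :=
  !![1 + t ^ 2 + t ^ 4 / 4, t + t ^ 3 / 2, t ^ 2 / 2, 0;
     t + t ^ 3 / 2, 1 + t ^ 2, t, 0;
     t ^ 2 / 2, t, 1, 0;
     0, 0, 0, 1]

lemma gMat_mul_gMatInv (t : ℝ) : gMat t * gMatInv t = 1 := by
  ext i j
  fin_cases i <;> fin_cases j <;>
    simp [gMat, gMatInv, Matrix.mul_apply, Fin.sum_univ_four] <;> ring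

lemma inv_gMat (t : ℝ) : (gMat t)⁻¹ = gMatInv t :=
  Matrix.inv_eq_right_inv (gMat_mul_gMatInv t)

lemma pd_comp_apply (i j : Fin 4) (f : ℝ → ℝ) (p : Fin 4 → ℝ) :
    pd i (fun q => f (q j)) p = if i = j then deriv f (p j) else 0 := by
  unfold pd
  split_ifs with h
  · subst h; simp
  · simp [Function.update_of_ne (Ne.symm h)]

def gMatDeriv (t : ℝ) : Matrix (Fin 4) (Fin 4) ℝ :=
  !![0, -1, t, 0;
     -1, 2 * t, -(1 + 3 * t ^ 2 / 2), 0;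
     t, -(1 + 3 * t ^ 2 / 2), 2 * t + t ^ 3, 0;
     0, 0, 0, 0]

lemma deriv_gMat_apply (j l : Fin 4) (t : ℝ) :
    deriv (fun s => gMat s j l) t = gMatDeriv t j l := by
  fin_cases j <;> fin_cases l <;>
    simp (disch := fun_prop) [gMat, gMatDeriv, deriv_fun_mul, deriv_fun_add] <;> ring

lemma pd_gMat_apply (i j l : Fin 4) (p : Fin 4 → ℝ) :
    pd i (fun q => gMat (q 3) j l) p = if i = 3 then gMatDeriv (p 3) j l else 0 := by
  rw [pd_comp_apply i 3 (fun t => gMat t j l), deriv_gMat_apply]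

def christoffel (t : ℝ) : Fin 4 → Fin 4 → Fin 4 → ℝ :=
  ![![![0, 0, 0, -t / 2], ![0, 0, 0, t ^ 2 / 4 - 1 / 2], ![0, 0, 0, 0],
      ![-t / 2, t ^ 2 / 4 - 1 / 2, 0, 0]],
    ![![0, 0, 0, -1 / 2], ![0, 0, 0, 0], ![0, 0, 0, t ^ 2 / 4 - 1 / 2],
      ![-1 / 2, 0, t ^ 2 / 4 - 1 / 2, 0]],
    ![![0, 0, 0, 0], ![0, 0, 0, -1 / 2], ![0, 0, 0, t / 2], ![0, -1 / 2, t / 2, 0]],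
    ![![0, 1 / 2, -t / 2, 0], ![1 / 2, -t, 1 / 2 + 3 * t ^ 2 / 4, 0],
      ![-t / 2, 1 / 2 + 3 * t ^ 2 / 4, -t - t ^ 3 / 2, 0], ![0, 0, 0, 0]]]

lemma Chr_eq_christoffel (p : Fin 4 → ℝ) (k i j : Fin 4) :
    Chr p k i j = christoffel (p 3) k i j := by
  simp only [Chr, inv_gMat, pd_gMat_apply, Fin.sum_univ_four]
  fin_cases k <;> fin_cases i <;> fin_cases j <;>
    simp [gMatInv, gMatDeriv, christoffel] <;> ring

lemma nabla_comp_three_apply (u v : ℝ → Fin 4 → ℝ) (p : Fin 4 → ℝ) (k : Fin 4) :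
    nabla (fun q => u (q 3)) (fun q => v (q 3)) p k
      = u (p 3) 3 * deriv (fun s => v s k) (p 3)
        + ∑ i, ∑ j, christoffel (p 3) k i j * u (p 3) i * v (p 3) j := by
  simp only [nabla, pd_comp_apply _ 3 (fun s => v s k), Chr_eq_christoffel, mul_ite, mul_zero,
    Finset.sum_ite_eq', Finset.mem_univ, if_true]

def frameCoords (A B C D : ℝ → ℝ) (t : ℝ) : Fin 4 → ℝ :=
  ![A t + B t * t + C t * (t ^ 2 / 2), B t + C t * t, C t, D t]

def frameCoordsDeriv (A B C D : ℝ → ℝ) (t : ℝ) : Fin 4 → ℝ :=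
  ![deriv A t + (deriv B t * t + B t) + (deriv C t * (t ^ 2 / 2) + C t * t),
    deriv B t + (deriv C t * t + C t), deriv C t, deriv D t]

lemma frame_combination_eq (A B C D : ℝ → ℝ) :
    (fun q => A (q 3) • eVF 0 q + B (q 3) • eVF 1 q + C (q 3) • eVF 2 q + D (q 3) • eVF 3 q)
      = fun q => frameCoords A B C D (q 3) := by
  ext q k
  fin_cases k <;> simp [eVF, frameCoords]

lemma deriv_frameCoords (A B C D : ℝ → ℝ) (t : ℝ) (hA : DifferentiableAt ℝ A t)
    (hB : DifferentiableAt ℝ B t) (hC : DifferentiableAt ℝ C t) (k : Fin 4) :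
    deriv (fun s => frameCoords A B C D s k) t = frameCoordsDeriv A B C D t k := by
  fin_cases k <;>
    simp (disch := fun_prop) [frameCoords, frameCoordsDeriv, deriv_fun_mul, deriv_fun_add]
  norm_num

lemma gMet_nabla_frame_self (A B C D a b c d : ℝ → ℝ) (p : Fin 4 → ℝ)
    (hA : DifferentiableAt ℝ A (p 3)) (hB : DifferentiableAt ℝ B (p 3))
    (hC : DifferentiableAt ℝ C (p 3)) :
    gMet p (nabla
        (fun q => A (q 3) • eVF 0 q + B (q 3) • eVF 1 q + C (q 3) • eVF 2 q + D (q 3) • eVF 3 q)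
        (fun q => A (q 3) • eVF 0 q + B (q 3) • eVF 1 q + C (q 3) • eVF 2 q + D (q 3) • eVF 3 q) p)
      (a (p 3) • eVF 0 p + b (p 3) • eVF 1 p + c (p 3) • eVF 2 p + d (p 3) • eVF 3 p)
    = A (p 3) * (B (p 3) * d (p 3) - b (p 3) * D (p 3))
      + B (p 3) * (C (p 3) * d (p 3) - c (p 3) * D (p 3))
      + D (p 3) * (a (p 3) * deriv A (p 3) + b (p 3) * deriv B (p 3)
          + c (p 3) * deriv C (p 3) + d (p 3) * deriv D (p 3)) := by
  rw [frame_combination_eq, congrFun (frame_combination_eq a b c d) p]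
  simp only [gMet, nabla_comp_three_apply, deriv_frameCoords A B C D _ hA hB hC]
  simp [Fin.sum_univ_four, gMat, christoffel, frameCoords, frameCoordsDeriv]
  ring

theorem nil4_minimality_criterion_general
    (a b c d : ℝ → ℝ) (A B C D : Fin 3 → ℝ → ℝ)
    (hA : ∀ i, Differentiable ℝ (A i)) (hB : ∀ i, Differentiable ℝ (B i))
    (hC : ∀ i, Differentiable ℝ (C i))
    (ξ : (Fin 4 → ℝ) → (Fin 4 → ℝ))
    (X : Fin 3 → (Fin 4 → ℝ) → (Fin 4 → ℝ))
    (hξ : ξ = fun q => a (q 3) • eVF 0 q + b (q 3) • eVF 1 q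
      + c (q 3) • eVF 2 q + d (q 3) • eVF 3 q)
    (hX : ∀ i, X i = fun q => A i (q 3) • eVF 0 q + B i (q 3) • eVF 1 q
      + C i (q 3) • eVF 2 q + D i (q 3) • eVF 3 q) :
    (∀ p : Fin 4 → ℝ,
      (∑ i, gMet p (nabla (X i) (X i) p) (ξ p))
        = ∑ i, (A i (p 3) * (B i (p 3) * d (p 3) - b (p 3) * D i (p 3))
            + B i (p 3) * (C i (p 3) * d (p 3) - c (p 3) * D i (p 3))
            + D i (p 3) * (a (p 3) * deriv (A i) (p 3) + b (p 3) * deriv (B i) (p 3)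
              + c (p 3) * deriv (C i) (p 3) + d (p 3) * deriv (D i) (p 3)))) ∧
    ((∀ p : Fin 4 → ℝ,
        (1 / 3 : ℝ) * ∑ i, gMet p (nabla (X i) (X i) p) (ξ p) = 0)
      ↔ (∀ t : ℝ,
        (∑ i, (A i t * (B i t * d t - b t * D i t)
            + B i t * (C i t * d t - c t * D i t)
            + D i t * (a t * deriv (A i) t + b t * deriv (B i) t
              + c t * deriv (C i) t + d t * deriv (D i) t))) = 0)) := by
  have hsum : ∀ p : Fin 4 → ℝ, (∑ i, gMet p (nabla (X i) (X i) p) (ξ p))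
      = ∑ i, (A i (p 3) * (B i (p 3) * d (p 3) - b (p 3) * D i (p 3))
            + B i (p 3) * (C i (p 3) * d (p 3) - c (p 3) * D i (p 3))
            + D i (p 3) * (a (p 3) * deriv (A i) (p 3) + b (p 3) * deriv (B i) (p 3)
              + c (p 3) * deriv (C i) (p 3) + d (p 3) * deriv (D i) (p 3))) := fun p =>
    Finset.sum_congr rfl fun i _ => by
      rw [hX i, hξ]
      exact gMet_nabla_frame_self _ _ _ _ a b c d p (hA i _) (hB i _) (hC i _)
  refine ⟨hsum, fun h t => ?_, fun h p => ?_⟩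
  · simpa [hsum] using h (fun _ => t)
  · rw [hsum, h, mul_zero]

/-- The minimality criterion of Theorem 4: with ξ = a e₁ + b e₂ + c e₃ + d e₄ a unit
normal and {X₁,X₂,X₃} (Xᵢ = aᵢe₁ + bᵢe₂ + cᵢe₃ + dᵢe₄) an orthonormal tangent frame,
all coefficients functions of t alone, the sum Σᵢ g̃(∇̃_{Xᵢ}Xᵢ, ξ) equals
Σᵢ [aᵢ(bᵢd − bdᵢ) + bᵢ(cᵢd − cdᵢ) + dᵢ(aaᵢ' + bbᵢ' + ccᵢ' + ddᵢ')]; in particular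
the mean curvature H vanishes identically iff this expression vanishes identically. -/
theorem nil4_minimality_criterion
    (a b c d : ℝ → ℝ) (A B C D : Fin 3 → ℝ → ℝ)
    (ha : Differentiable ℝ a) (hb : Differentiable ℝ b)
    (hc : Differentiable ℝ c) (hd : Differentiable ℝ d)
    (hA : ∀ i, Differentiable ℝ (A i)) (hB : ∀ i, Differentiable ℝ (B i))
    (hC : ∀ i, Differentiable ℝ (C i)) (hD : ∀ i, Differentiable ℝ (D i))
    (ξ : (Fin 4 → ℝ) → (Fin 4 → ℝ))
    (X : Fin 3 → (Fin 4 → ℝ) → (Fin 4 → ℝ))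
    (hξ : ξ = fun q => a (q 3) • eVF 0 q + b (q 3) • eVF 1 q
      + c (q 3) • eVF 2 q + d (q 3) • eVF 3 q)
    (hX : ∀ i, X i = fun q => A i (q 3) • eVF 0 q + B i (q 3) • eVF 1 q
      + C i (q 3) • eVF 2 q + D i (q 3) • eVF 3 q)
    (hunit : ∀ p : Fin 4 → ℝ, gMet p (ξ p) (ξ p) = 1)
    (horth : ∀ (p : Fin 4 → ℝ) (i : Fin 3), gMet p (X i p) (ξ p) = 0)
    (hon : ∀ (p : Fin 4 → ℝ) (i j : Fin 3),
      gMet p (X i p) (X j p) = if i = j then 1 else 0) :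
    (∀ p : Fin 4 → ℝ,
      (∑ i, gMet p (nabla (X i) (X i) p) (ξ p))
        = ∑ i, (A i (p 3) * (B i (p 3) * d (p 3) - b (p 3) * D i (p 3))
            + B i (p 3) * (C i (p 3) * d (p 3) - c (p 3) * D i (p 3))
            + D i (p 3) * (a (p 3) * deriv (A i) (p 3) + b (p 3) * deriv (B i) (p 3)
              + c (p 3) * deriv (C i) (p 3) + d (p 3) * deriv (D i) (p 3)))) ∧
    ((∀ p : Fin 4 → ℝ,
        (1 / 3 : ℝ) * ∑ i, gMet p (nabla (X i) (X i) p) (ξ p) = 0)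
      ↔ (∀ t : ℝ,
        (∑ i, (A i t * (B i t * d t - b t * D i t)
            + B i t * (C i t * d t - c t * D i t)
            + D i t * (a t * deriv (A i) t + b t * deriv (B i) t
              + c t * deriv (C i) t + d t * deriv (D i) t))) = 0)) :=
  nil4_minimality_criterion_general a b c d A B C D hA hB hC ξ X hξ hX
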